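/- There exists a universal constant C > 0 such that for every h > 0 and every complex sequence φ = (φ_j)_{j∈ℤ} with ∑_j h|φ_j|² < ∞, one has ‖φ‖₄ ≤ C ‖φ‖₂^{3/4} ‖D₊φ‖₂^{1/4}, where ‖φ‖_p = (∑_j h|φ_j|^p)^{1/p} and (D₊φ)_j = (φ_{j+1}−φ_j)/h. -/

import Mathlib

/-!
With `g = ‖φ‖²`, which tends to `0` at `-∞`, every value `g j` is bounded by the total variation
`∑ |g (k + 1) - g k|`. Since `|g (k + 1) - g k| ≤ (‖φ (k + 1)‖ + ‖φ k‖) ‖φ (k + 1) - φ k‖`,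
Cauchy–Schwarz gives the discrete Agmon inequality `sup g ≤ 2 ‖φ‖₂ ‖φ (· + 1) - φ‖₂` (unweighted
sums), and then `∑ g² ≤ sup g · ∑ g`. The mesh weights scale out of the resulting bound
`∑ h g² ≤ 2 (∑ h g)^{3/2} (∑ h |D₊φ|²)^{1/2}`, so `C = 2^{1/4}` works.
-/

open Filter Topology

theorem norm_le_tsum_norm_sub_of_tendsto_atBot {E : Type*} [SeminormedAddCommGroup E]
    {f : ℤ → E} (hf : Tendsto f atBot (𝓝 0)) (hΔ : Summable fun k => ‖f (k + 1) - f k‖)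
    (j : ℤ) : ‖f j‖ ≤ ∑' k, ‖f (k + 1) - f k‖ := by
  set e : ℕ → ℤ := fun i => j - 1 - i
  have he : Function.Injective e := fun a b hab => by simpa [e] using hab
  have hpartial : ∀ n : ℕ, ‖f j - f (j - n)‖ ≤ ∑' k, ‖f (k + 1) - f k‖ := fun n => calc
    ‖f j - f (j - n)‖ ≤ ∑ i ∈ Finset.range n, ‖f (e i + 1) - f (e i)‖ := by
        convert dist_le_range_sum_dist (fun i : ℕ => f (j - i)) n using 2 with i
        · simp [dist_eq_norm]
        · rw [dist_eq_norm]; congr 3 <;> simp only [e] <;> push_cast <;> ring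
    _ ≤ ∑' i, ‖f (e i + 1) - f (e i)‖ :=
        (hΔ.comp_injective he).sum_le_tsum _ fun _ _ => norm_nonneg _
    _ ≤ ∑' k, ‖f (k + 1) - f k‖ := tsum_comp_le_tsum_of_inj hΔ (fun _ => norm_nonneg _) he
  have hdown : Tendsto (fun n : ℕ => j - (n : ℤ)) atTop atBot :=
    tendsto_atBot.2 fun b => eventually_atTop.2 ⟨(j - b).toNat, fun n hn => by omega⟩
  have hlim : Tendsto (fun n : ℕ => ‖f j - f (j - n)‖) atTop (𝓝 ‖f j‖) := by
    simpa using ((hf.comp hdown).const_sub (f j)).norm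
  exact le_of_tendsto' hlim hpartial

theorem abs_norm_sq_sub_norm_sq_le {E : Type*} [SeminormedAddCommGroup E] (a b : E) :
    |‖a‖ ^ 2 - ‖b‖ ^ 2| ≤ (‖a‖ + ‖b‖) * ‖a - b‖ := by
  rw [sq_sub_sq, abs_mul, abs_of_nonneg (by positivity : 0 ≤ ‖a‖ + ‖b‖)]
  exact mul_le_mul_of_nonneg_left (abs_norm_sub_norm_le a b) (by positivity)

theorem tsum_mul_le_sqrt_mul_sqrt {ι : Type*} {f g : ι → ℝ} (hf : ∀ i, 0 ≤ f i)
    (hg : ∀ i, 0 ≤ g i) (hf_sum : Summable fun i => f i ^ 2) (hg_sum : Summable fun i => g i ^ 2) :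
    (Summable fun i => f i * g i) ∧
      ∑' i, f i * g i ≤ √(∑' i, f i ^ 2) * √(∑' i, g i ^ 2) := by
  have := Real.summable_and_inner_le_Lp_mul_Lq_tsum_of_nonneg .two_two hf hg
    (by simpa only [Real.rpow_two] using hf_sum) (by simpa only [Real.rpow_two] using hg_sum)
  simpa only [Real.rpow_two, Real.sqrt_eq_rpow] using this

section
variable {E : Type*} [SeminormedAddCommGroup E] {φ : ℤ → E}

theorem summable_and_tsum_norm_add_norm_sq_le (hφ : Summable fun j => ‖φ j‖ ^ 2) :
    (Summable fun k => (‖φ (k + 1)‖ + ‖φ k‖) ^ 2) ∧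
      ∑' k, (‖φ (k + 1)‖ + ‖φ k‖) ^ 2 ≤ 4 * ∑' k, ‖φ k‖ ^ 2 := by
  have hshift : Summable fun k => ‖φ (k + 1)‖ ^ 2 := hφ.comp_injective (add_left_injective 1)
  have hbound : Summable fun k => 2 * (‖φ (k + 1)‖ ^ 2 + ‖φ k‖ ^ 2) := (hshift.add hφ).mul_left 2
  have hsum : Summable fun k => (‖φ (k + 1)‖ + ‖φ k‖) ^ 2 :=
    .of_nonneg_of_le (fun _ => sq_nonneg _) (fun _ => add_sq_le) hbound
  refine ⟨hsum, ?_⟩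
  calc ∑' k, (‖φ (k + 1)‖ + ‖φ k‖) ^ 2 ≤ ∑' k, 2 * (‖φ (k + 1)‖ ^ 2 + ‖φ k‖ ^ 2) :=
        hsum.tsum_le_tsum (fun _ => add_sq_le) hbound
    _ = 4 * ∑' k, ‖φ k‖ ^ 2 := by
      have hshift_eq : ∑' k, ‖φ (k + 1)‖ ^ 2 = ∑' k, ‖φ k‖ ^ 2 :=
        (Equiv.addRight (1 : ℤ)).tsum_eq fun k => ‖φ k‖ ^ 2
      rw [tsum_mul_left, hshift.tsum_add hφ, hshift_eq]
      ring

theorem summable_norm_sub_sq (hφ : Summable fun j => ‖φ j‖ ^ 2) :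
    Summable fun k => ‖φ (k + 1) - φ k‖ ^ 2 :=
  (summable_and_tsum_norm_add_norm_sq_le hφ).1.of_nonneg_of_le (fun _ => sq_nonneg _)
    fun _ => pow_le_pow_left₀ (norm_nonneg _) (norm_sub_le _ _) 2

theorem sq_norm_le_two_mul_sqrt_mul_sqrt (hφ : Summable fun j => ‖φ j‖ ^ 2) (j : ℤ) :
    ‖φ j‖ ^ 2 ≤ 2 * √(∑' k, ‖φ k‖ ^ 2) * √(∑' k, ‖φ (k + 1) - φ k‖ ^ 2) := by
  obtain ⟨hu, hu_le⟩ := summable_and_tsum_norm_add_norm_sq_le hφ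
  obtain ⟨hud, hCS⟩ := tsum_mul_le_sqrt_mul_sqrt (f := fun k => ‖φ (k + 1)‖ + ‖φ k‖)
    (g := fun k => ‖φ (k + 1) - φ k‖) (fun _ => by positivity) (fun _ => norm_nonneg _)
    hu (summable_norm_sub_sq hφ)
  have hΔ : Summable fun k => |‖φ (k + 1)‖ ^ 2 - ‖φ k‖ ^ 2| :=
    hud.of_nonneg_of_le (fun _ => abs_nonneg _) fun _ => abs_norm_sq_sub_norm_sq_le _ _
  have hlim : Tendsto (fun k => ‖φ k‖ ^ 2) atBot (𝓝 0) :=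
    hφ.tendsto_cofinite_zero.mono_left (by rw [Int.cofinite_eq]; exact le_sup_left)
  calc ‖φ j‖ ^ 2 = |‖φ j‖ ^ 2| := (abs_of_nonneg (by positivity)).symm
    _ ≤ ∑' k, |‖φ (k + 1)‖ ^ 2 - ‖φ k‖ ^ 2| := by
      simpa only [Real.norm_eq_abs] using
        norm_le_tsum_norm_sub_of_tendsto_atBot hlim (by simpa only [Real.norm_eq_abs] using hΔ) j
    _ ≤ ∑' k, (‖φ (k + 1)‖ + ‖φ k‖) * ‖φ (k + 1) - φ k‖ :=
      hΔ.tsum_le_tsum (fun _ => abs_norm_sq_sub_norm_sq_le _ _) hud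
    _ ≤ √(4 * ∑' k, ‖φ k‖ ^ 2) * √(∑' k, ‖φ (k + 1) - φ k‖ ^ 2) :=
      hCS.trans (mul_le_mul_of_nonneg_right (Real.sqrt_le_sqrt hu_le) (Real.sqrt_nonneg _))
    _ = 2 * √(∑' k, ‖φ k‖ ^ 2) * √(∑' k, ‖φ (k + 1) - φ k‖ ^ 2) := by
      rw [Real.sqrt_mul' _ (tsum_nonneg fun _ => sq_nonneg _)]
      norm_num

theorem tsum_norm_pow_four_le (hφ : Summable fun j => ‖φ j‖ ^ 2) :
    ∑' j, ‖φ j‖ ^ 4 ≤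
      2 * √(∑' k, ‖φ k‖ ^ 2) * √(∑' k, ‖φ (k + 1) - φ k‖ ^ 2) * ∑' k, ‖φ k‖ ^ 2 := by
  set M := 2 * √(∑' k, ‖φ k‖ ^ 2) * √(∑' k, ‖φ (k + 1) - φ k‖ ^ 2)
  have hle : ∀ j, ‖φ j‖ ^ 4 ≤ M * ‖φ j‖ ^ 2 := fun j => by
    rw [show ‖φ j‖ ^ 4 = ‖φ j‖ ^ 2 * ‖φ j‖ ^ 2 by ring]
    exact mul_le_mul_of_nonneg_right (sq_norm_le_two_mul_sqrt_mul_sqrt hφ j) (by positivity)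
  rw [← tsum_mul_left]
  exact Summable.tsum_le_tsum hle
    ((hφ.mul_left M).of_nonneg_of_le (fun _ => by positivity) hle) (hφ.mul_left M)

end

theorem rpow_one_div_four_le_of_le {X A B : ℝ} (hX : 0 ≤ X) (hA : 0 ≤ A) (hB : 0 ≤ B)
    (hle : X ≤ 2 * √A * √B * A) :
    X ^ ((1 : ℝ) / 4) ≤ 2 ^ ((1 : ℝ) / 4) * A ^ ((3 : ℝ) / 8) * B ^ ((1 : ℝ) / 8) := by
  have hpow : 2 * √A * √B * A = 2 * A ^ ((3 : ℝ) / 2) * B ^ ((1 : ℝ) / 2) := by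
    rw [Real.sqrt_eq_rpow, Real.sqrt_eq_rpow, show (3 : ℝ) / 2 = 1 / 2 + 1 by norm_num,
      Real.rpow_add' hA (by norm_num), Real.rpow_one]
    ring
  calc X ^ ((1 : ℝ) / 4) ≤ (2 * A ^ ((3 : ℝ) / 2) * B ^ ((1 : ℝ) / 2)) ^ ((1 : ℝ) / 4) :=
        Real.rpow_le_rpow hX (hle.trans_eq hpow) (by norm_num)
    _ = 2 ^ ((1 : ℝ) / 4) * A ^ ((3 : ℝ) / 8) * B ^ ((1 : ℝ) / 8) := by
      rw [Real.mul_rpow (by positivity) (by positivity),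
        Real.mul_rpow (by norm_num) (by positivity), ← Real.rpow_mul hA, ← Real.rpow_mul hB]
      norm_num

/-- Discrete Gagliardo–Nirenberg inequality in ℓ⁴:
`‖φ‖₄ ≤ C ‖φ‖₂^{3/4} ‖D₊φ‖₂^{1/4}`, i.e. with mesh-weighted sums,
`(∑ h|φ|⁴)^{1/4} ≤ C (∑ h|φ|²)^{3/8} (∑ h|D₊φ|²)^{1/8}`. -/
theorem discrete_GNS_l4 :
    ∃ C > 0, ∀ h : ℝ, 0 < h → ∀ φ : ℤ → ℂ,
      Summable (fun j : ℤ => h * ‖φ j‖ ^ 2) →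
      (∑' j : ℤ, h * ‖φ j‖ ^ 4) ^ ((1 : ℝ) / 4) ≤
        C * (∑' j : ℤ, h * ‖φ j‖ ^ 2) ^ ((3 : ℝ) / 8) *
          (∑' j : ℤ, h * (‖φ (j + 1) - φ j‖ / h) ^ 2) ^ ((1 : ℝ) / 8) := by
  refine ⟨2 ^ ((1 : ℝ) / 4), by positivity, fun h hh φ hφ => ?_⟩
  have hφ' : Summable fun j => ‖φ j‖ ^ 2 := (summable_mul_left_iff hh.ne').1 hφ
  have hdiff : ∑' j, h * (‖φ (j + 1) - φ j‖ / h) ^ 2 = (∑' j, ‖φ (j + 1) - φ j‖ ^ 2) / h := by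
    rw [← tsum_div_const]
    congr with j
    field_simp
  rw [tsum_mul_left, tsum_mul_left, hdiff]
  refine rpow_one_div_four_le_of_le (by positivity) (by positivity) (by positivity) ?_
  calc h * ∑' j, ‖φ j‖ ^ 4
      ≤ h * (2 * √(∑' j, ‖φ j‖ ^ 2) * √(∑' j, ‖φ (j + 1) - φ j‖ ^ 2) * ∑' j, ‖φ j‖ ^ 2) :=
        mul_le_mul_of_nonneg_left (tsum_norm_pow_four_le hφ') hh.le
    _ = _ := by
      rw [Real.sqrt_mul hh.le, Real.sqrt_div' _ hh.le]
      field_simp
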